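/- arXiv:2003.08616 — 2 statements merged into one kernel-verified Lean document; each statement's English description precedes it below -/
import Mathlib

section
/- Let x ∈ S_n, 0 ≤ k ≤ n, t ≥ 1, and define x' ∈ S_{n+t} as in equation (2.1): x'(i) = k+i for i ≤ t, x'(i) = x(i-t) if i > t and x(i-t) ≤ k, x'(i) = x(i-t)+t otherwise. Then the P-symbol of x' equals the tableau obtained from P(x) by first adding t to every entry of P(x) greater than k, and then column-inserting the values k+t, k+t-1, ..., k+1 in that order. -/
/-- Column insertion of a value into a tableau represented as a list of columns
(each column a strictly increasing list, read top to bottom). The value bumps the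
smallest entry of the first column larger than it (or is appended at the bottom),
and any bumped entry is inserted into the next column. -/
def insertCol : ℕ → List (List ℕ) → List (List ℕ)
  | v, [] => [[v]]
  | v, c :: cs =>
    match c.find? (fun x => v < x) with
    | none => (c ++ [v]) :: cs
    | some x => (c.map fun y => if y = x then v else y) :: insertCol x cs

/-- Place the entry `i` at the bottom of the `j`-th column (0-based). -/
def placeAt (i : ℕ) : ℕ → List (List ℕ) → List (List ℕ)
  | 0, [] => [[i]]
  | 0, c :: cs => (c ++ [i]) :: cs
  | _ + 1, [] => [[i]]
  | j + 1, c :: cs => c :: placeAt i j cs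

/-- The shape of a tableau: the list of its column lengths. -/
def shapeOf (T : List (List ℕ)) : List ℕ := T.map List.length

/-- Index of the first position where two lists differ. -/
def diffIdx : List ℕ → List ℕ → ℕ
  | a :: as, b :: bs => if a = b then diffIdx as bs + 1 else 0
  | _, _ => 0

/-- The Robinson–Schensted pair `(P, Q)` of a word `w = [w 1, …, w n]` (one-line
notation): `P` is obtained by column inserting `w n, w (n-1), …, w 1` into the empty
tableau, and `Q` records, with entry `i`, the box added at the `i`-th insertion step. -/
def RSpair (w : List ℕ) : List (List ℕ) × List (List ℕ) :=
  (w.reverse.zipIdx.map Prod.swap).foldl (fun PQ p =>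
    let P' := insertCol p.2 PQ.1
    (P', placeAt (p.1 + 1) (diffIdx (shapeOf PQ.1) (shapeOf P')) PQ.2)) ([], [])

/-- The Robinson–Schensted `P`-symbol (insertion tableau) of a word. -/
def Psymb (w : List ℕ) : List (List ℕ) := (RSpair w).1

/-- The Robinson–Schensted `Q`-symbol (recording tableau) of a word. -/
def Qsymb (w : List ℕ) : List (List ℕ) := (RSpair w).2

/-- One-line notation (1-based values) of a permutation of `Fin n`. -/
def oneLine {n : ℕ} (w : Equiv.Perm (Fin n)) : List ℕ := List.ofFn fun i => (w i : ℕ) + 1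

/-- The `P`-symbol of a permutation. Two permutations of `S_n` lie in the same right
Kazhdan–Lusztig cell iff their `P`-symbols coincide. -/
def RSP {n : ℕ} (w : Equiv.Perm (Fin n)) : List (List ℕ) := Psymb (oneLine w)

/-- The `Q`-symbol of a permutation. Two permutations of `S_n` lie in the same left
Kazhdan–Lusztig cell iff their `Q`-symbols coincide. -/
def RSQ {n : ℕ} (w : Equiv.Perm (Fin n)) : List (List ℕ) := Qsymb (oneLine w)

/-- A list of columns is a standard tableau: columns are nonempty and strictly
increasing, column lengths weakly decrease, and rows strictly increase. -/
def ColsStandard (T : List (List ℕ)) : Prop :=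
  (∀ c ∈ T, c ≠ [] ∧ c.Pairwise (· < ·)) ∧
  T.Chain' (fun c c' => c'.length ≤ c.length ∧ ∀ i < c'.length, c.getD i 0 < c'.getD i 0)

/-- A standard Young tableau with `n` boxes: standard, with entries exactly `1, …, n`. -/
def IsSYT (n : ℕ) (T : List (List ℕ)) : Prop :=
  ColsStandard T ∧ T.flatten.Perm (List.range' 1 n)

/-- The (1-based) index of the column of `T` containing the entry `s`. -/
def colIndex (T : List (List ℕ)) (s : ℕ) : ℕ := T.findIdx (fun c => c.contains s) + 1

/-- The number of inversions `ℓ(f) = #{(i,j) : i < j, f i > f j}`. -/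
def invNum {N : ℕ} (f : Fin N → ℕ) : ℕ :=
  (Finset.univ.filter fun p : Fin N × Fin N => p.1 < p.2 ∧ f p.2 < f p.1).card

/-- Ehresmann's tableau (rank-matrix) characterisation of the Bruhat order, stated for
arbitrary functions: `f ≤ g` iff `#{i ≤ p : f i ≥ q} ≤ #{i ≤ p : g i ≥ q}` for all `p, q`. -/
def rankLE {N : ℕ} (f g : Fin N → ℕ) : Prop :=
  ∀ p q : ℕ,
    (Finset.univ.filter fun i : Fin N => (i : ℕ) ≤ p ∧ q ≤ f i).card ≤
      (Finset.univ.filter fun i : Fin N => (i : ℕ) ≤ p ∧ q ≤ g i).card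

/-- The Bruhat order on the symmetric group `S_N`. -/
def bruhatLE {N : ℕ} (x y : Equiv.Perm (Fin N)) : Prop :=
  rankLE (fun i => (x i : ℕ)) (fun i => (y i : ℕ))

/-- Equation (2.1) of Lanini–McNamara, in 0-based terms: given `x : Fin n → ℕ`
(0-based one-line values), produce the one-line values of `x' ∈ S_{n+t}`:
`x' i = k + i` for `i < t`; for `i ≥ t`, `x' i = x (i - t)` if `x (i - t) < k`
and `x' i = x (i - t) + t` otherwise. -/
def primeMap (n t k : ℕ) (x : Fin n → ℕ) : Fin (n + t) → ℕ := fun i =>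
  if _h : (i : ℕ) < t then k + i
  else
    have hi : (i : ℕ) - t < n := by omega
    if x ⟨(i : ℕ) - t, hi⟩ < k then x ⟨(i : ℕ) - t, hi⟩ else x ⟨(i : ℕ) - t, hi⟩ + t

/-- Add `t` to every entry of the tableau greater than `k`. -/
def shiftGT (k t : ℕ) (T : List (List ℕ)) : List (List ℕ) :=
  T.map (List.map fun e => if k < e then e + t else e)


/-!
Column insertion only compares entries, so it commutes with every strictly increasing
relabelling of the values. The one-line word of `x'` is the increasing run
`k + 1, …, k + t` followed by the word of `x` relabelled by `e ↦ if k < e then e + t else e`.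
Since `P` inserts the word from right to left, it first builds the relabelled `P(x)` and then
inserts the run backwards.
-/

def shiftAbove (k t e : ℕ) : ℕ := if k < e then e + t else e

lemma shiftAbove_strictMono (k t : ℕ) : StrictMono (shiftAbove k t) := by
  intro a b hab
  unfold shiftAbove
  split <;> split <;> omega

lemma shiftGT_eq_map_shiftAbove (k t : ℕ) (T : List (List ℕ)) :
    shiftGT k t T = T.map (List.map (shiftAbove k t)) := rfl

lemma insertCol_map_of_strictMono {f : ℕ → ℕ} (hf : StrictMono f) (v : ℕ)
    (T : List (List ℕ)) :
    insertCol (f v) (T.map (List.map f)) = (insertCol v T).map (List.map f) := by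
  induction T generalizing v with
  | nil => simp [insertCol]
  | cons c cs ih =>
    have hbump : (fun x => decide (f v < x)) ∘ f = fun x => decide (v < x) := by
      funext y; simp [hf.lt_iff_lt]
    simp only [List.map_cons, insertCol, List.find?_map, hbump]
    cases c.find? (fun x => decide (v < x)) with
    | none => simp
    | some w =>
      simp only [Option.map_some, ih, List.map_map, List.map_cons]
      congr 1
      refine List.map_congr_left fun y _ => ?_
      by_cases h : y = w
      · simp [h]
      · simp [h, hf.injective.ne h]

lemma foldl_insertCol_map_of_strictMono {f : ℕ → ℕ} (hf : StrictMono f) (l : List ℕ)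
    (T : List (List ℕ)) :
    (l.map f).foldl (fun U v => insertCol v U) (T.map (List.map f)) =
      (l.foldl (fun U v => insertCol v U) T).map (List.map f) := by
  induction l generalizing T with
  | nil => rfl
  | cons a l ih =>
    simp only [List.map_cons, List.foldl_cons, insertCol_map_of_strictMono hf]
    exact ih _

lemma foldl_map_swap_zipIdx {α β : Type*} (g : β → α → β) (l : List α) (i : ℕ) (b : β) :
    ((l.zipIdx i).map Prod.swap).foldl (fun U p => g U p.2) b = l.foldl g b := by
  induction l generalizing i b with
  | nil => rfl
  | cons a l ih => simpa [List.zipIdx_cons] using ih (i + 1) (g b a)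

lemma Psymb_eq_foldl_insertCol (w : List ℕ) :
    Psymb w = w.reverse.foldl (fun U v => insertCol v U) [] := by
  have hfst : ∀ (l : List (ℕ × ℕ)) (P Q : List (List ℕ)),
      (l.foldl (fun PQ p =>
        let P' := insertCol p.2 PQ.1
        (P', placeAt (p.1 + 1) (diffIdx (shapeOf PQ.1) (shapeOf P')) PQ.2)) (P, Q)).1 =
        l.foldl (fun U p => insertCol p.2 U) P := by
    intro l
    induction l with
    | nil => intros; rfl
    | cons a l ih => intro P Q; exact ih _ _
  rw [Psymb, RSpair, hfst]
  exact foldl_map_swap_zipIdx (fun U v => insertCol v U) w.reverse 0 []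

lemma ofFn_primeMap_eq_append (n t k : ℕ) (x : Fin n → ℕ) :
    (List.ofFn fun i => primeMap n t k x i + 1) =
      (List.ofFn fun i : Fin t => k + i + 1) ++
        (List.ofFn fun j => x j + 1).map (shiftAbove k t) := by
  refine List.ext_getElem (by simp [Nat.add_comm]) fun i hi _ => ?_
  rw [List.length_ofFn] at hi
  simp only [List.getElem_ofFn, List.getElem_append, List.length_ofFn, List.getElem_map]
  unfold primeMap shiftAbove
  dsimp only
  split
  · simp
  · split <;> split <;> omega

lemma reverse_ofFn_add_succ (k t : ℕ) :
    (List.ofFn fun i : Fin t => k + i + 1).reverse = (List.range t).map fun j => k + t - j := by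
  refine List.ext_getElem (by simp) fun i hi _ => ?_
  rw [List.length_reverse, List.length_ofFn] at hi
  simp only [List.getElem_reverse, List.getElem_ofFn, List.length_ofFn, List.getElem_map,
    List.getElem_range]
  omega

theorem psymbol_of_primeMap_general (n t k : ℕ)
    (x : Equiv.Perm (Fin n)) :
    Psymb (List.ofFn fun i => primeMap n t k (fun j => (x j : ℕ)) i + 1) =
      ((List.range t).map fun j => k + t - j).foldl (fun U v => insertCol v U)
        (shiftGT k t (RSP x)) := by
  have hshift : ((oneLine x).reverse.map (shiftAbove k t)).foldl
      (fun U v => insertCol v U) [] = shiftGT k t (RSP x) := by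
    rw [shiftGT_eq_map_shiftAbove, RSP, Psymb_eq_foldl_insertCol]
    exact foldl_insertCol_map_of_strictMono (shiftAbove_strictMono k t) _ []
  rw [Psymb_eq_foldl_insertCol, ofFn_primeMap_eq_append, List.reverse_append,
    List.foldl_append, ← List.map_reverse, show (List.ofFn fun j => (x j : ℕ) + 1) = oneLine x from rfl, hshift,
    reverse_ofFn_add_succ]

/-- The `P`-symbol of the permutation `x'` of equation (2.1) is obtained from `P(x)` by
adding `t` to every entry greater than `k` and then column inserting
`k + t, k + t - 1, …, k + 1` in that order. -/
theorem psymbol_of_primeMap (n t k : ℕ) (ht : 1 ≤ t) (hk : k ≤ n)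
    (x : Equiv.Perm (Fin n)) :
    Psymb (List.ofFn fun i => primeMap n t k (fun j => (x j : ℕ)) i + 1) =
      ((List.range t).map fun j => k + t - j).foldl (fun U v => insertCol v U)
        (shiftGT k t (RSP x)) :=
  psymbol_of_primeMap_general n t k x
end

section
/- Let x ≤ y in S_n and x', y' ∈ S_{n+t} be defined by equation (2.1) with parameters k, t. Then Φ = {t+1, ..., t+n} is an interval pattern embedding of [x,y] into [x',y']: Φ is a common pattern embedding of x into x' and y into y', x' and y' agree outside Φ, and ℓ(y') - ℓ(x') = ℓ(y) - ℓ(x), hence [x,y] ≅ [x',y'] as posets. -/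
open Finset Equiv

/-!
The map `x ↦ x'` shifts positions by `t` and values `v ≥ k` by `t`, filling positions `< t` with
the values `k, …, k + t - 1`; both shifts are order embeddings, so patterns are preserved. The rank
counts `#{i ≤ p | q ≤ x' i}` are those of `x`, read through the Galois connection between the
value shift and its lower adjoint, plus a block depending only on `(t, k)`; hence `x ↦ x'` both
preserves and reflects the Bruhat order. If `x' ≤ w ≤ y'`, the rank counts of `x'` and `y'` on the
first `t` positions agree, which forces `w i = k + i` for `i < t`; the remaining values of `w` then
avoid `[k, k + t)`, so `w = z'` for some `z`, necessarily in `[x, y]`. Finally, each of the first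
`t` entries of `x'` forms an inversion exactly with the `k` later entries below `k`, so
`ℓ(x') = ℓ(x) + t k`.
-/

def gapShift (k t v : ℕ) : ℕ := if v < k then v else v + t

def gapPull (k t q : ℕ) : ℕ := if q ≤ k then q else if q ≤ k + t then k else q - t

section Gap

variable {k t : ℕ}

theorem strictMono_gapShift : StrictMono (gapShift k t) := by
  intro v w h
  unfold gapShift
  split_ifs <;> omega

theorem gapShift_lt_or_le (v : ℕ) : gapShift k t v < k ∨ k + t ≤ gapShift k t v := by
  unfold gapShift
  split_ifs <;> omega

theorem gapShift_lt_add_iff {i v : ℕ} (hi : i < t) : gapShift k t v < k + i ↔ v < k := by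
  unfold gapShift
  split_ifs <;> omega

theorem gc_gapPull_gapShift : GaloisConnection (gapPull k t) (gapShift k t) := by
  intro q v
  unfold gapPull gapShift
  split_ifs <;> omega

theorem gapPull_gapShift (q : ℕ) : gapPull k t (gapShift k t q) = q := by
  unfold gapPull gapShift
  split_ifs <;> omega

theorem gapShift_gapPull {v : ℕ} (hv : v < k ∨ k + t ≤ v) :
    gapShift k t (gapPull k t v) = v := by
  unfold gapShift gapPull
  split_ifs <;> omega

end Gap

theorem Fin.sum_univ_add_eq_sum_init_add_sum_shift {M : Type*} [AddCommMonoid M] {n t : ℕ}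
    (g : Fin (n + t) → M) :
    ∑ i, g i = ∑ i : Fin t, g ⟨i, by omega⟩ + ∑ a : Fin n, g ⟨t + a, by omega⟩ := by
  rw [← Fin.sum_congr' g (Nat.add_comm t n), Fin.sum_univ_add]
  rfl

theorem card_filter_perm_val_lt {n k : ℕ} (hk : k ≤ n) (z : Perm (Fin n)) :
    #{a | (z a : ℕ) < k} = k := by
  rw [card_filter, Equiv.sum_comp z (fun v => if (v : ℕ) < k then 1 else 0), ← card_filter,
    Fin.card_filter_val_lt, min_eq_right hk]

def rankCount {N : ℕ} (f : Fin N → ℕ) (p q : ℕ) : ℕ := #{i : Fin N | (i : ℕ) ≤ p ∧ q ≤ f i}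

theorem rankLE_iff_rankCount_le {N : ℕ} {f g : Fin N → ℕ} :
    rankLE f g ↔ ∀ p q, rankCount f p q ≤ rankCount g p q :=
  Iff.rfl

theorem apply_eq_of_rankLE_of_rankLE {N m : ℕ} {c : ℕ → ℕ} (hc : StrictMono c)
    {f g w : Fin N → ℕ} (hf : ∀ i : Fin N, (i : ℕ) < m → f i = c i)
    (hg : ∀ i : Fin N, (i : ℕ) < m → g i = c i) (hfw : rankLE f w) (hwg : rankLE w g)
    (i : Fin N) (hi : (i : ℕ) < m) : w i = c i := by
  induction i using WellFoundedLT.induction with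
  | _ i ih =>
  obtain ⟨j, hji, hj⟩ : ∃ j : Fin N, j ≤ i ∧ c i ≤ w j := by
    have hpos : 0 < rankCount f i (c i) := card_pos.2 ⟨i, by simp [hf i hi]⟩
    obtain ⟨j, hj⟩ := card_pos.1 (hpos.trans_le (hfw i (c i)))
    exact ⟨j, by simpa [rankCount] using hj⟩
  have hwi : w i ≤ c i := by
    by_contra! hlt
    have hpos : 0 < rankCount w i (c i + 1) := card_pos.2 ⟨i, by simpa using hlt⟩
    have hzero : rankCount g i (c i + 1) = 0 := card_eq_zero.2 <| filter_eq_empty_iff.2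
      fun j _ ⟨hji, hj⟩ => by
        rw [hg j (by omega)] at hj
        exact absurd hj (not_le.2 (Nat.lt_succ_of_le (hc.monotone hji)))
    exact (hpos.trans_le (hwg i (c i + 1))).ne' hzero
  obtain rfl | hlt := hji.eq_or_lt
  · omega
  · have := hc (Fin.lt_def.1 hlt)
    rw [ih j hlt (by omega)] at hj
    omega

theorem exists_interval_equiv_of_rel_iff {α β : Type*} {r : α → α → Prop} {s : β → β → Prop}
    {φ : α → β} (hφ : Function.Injective φ) (hrel : ∀ a b, s (φ a) (φ b) ↔ r a b) {x y : α}
    (hsurj : ∀ w, s (φ x) w → s w (φ y) → ∃ z, φ z = w) :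
    ∃ e : {z // r x z ∧ r z y} ≃ {w // s (φ x) w ∧ s w (φ y)},
      ∀ a b, r a.1 b.1 ↔ s (e a).1 (e b).1 := by
  let F (z : {z // r x z ∧ r z y}) : {w // s (φ x) w ∧ s w (φ y)} :=
    ⟨φ z, (hrel _ _).2 z.2.1, (hrel _ _).2 z.2.2⟩
  have hF : Function.Bijective F := by
    refine ⟨fun a b h => Subtype.ext (hφ (congrArg Subtype.val h)), fun ⟨w, hxw, hwy⟩ => ?_⟩
    obtain ⟨z, rfl⟩ := hsurj w hxw hwy
    exact ⟨⟨z, (hrel _ _).1 hxw, (hrel _ _).1 hwy⟩, rfl⟩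
  exact ⟨Equiv.ofBijective F hF, fun a b => (hrel a b).symm⟩

section PrimeMap

variable {n t k : ℕ}

theorem primeMap_of_lt (f : Fin n → ℕ) {i : Fin (n + t)} (h : (i : ℕ) < t) :
    primeMap n t k f i = k + i :=
  dif_pos h

theorem primeMap_of_le (f : Fin n → ℕ) {i : Fin (n + t)} (h : t ≤ (i : ℕ)) :
    primeMap n t k f i = gapShift k t (f ⟨i - t, by omega⟩) :=
  dif_neg (by omega)

theorem primeMap_add (f : Fin n → ℕ) (a : Fin n) (h : t + a < n + t) :
    primeMap n t k f ⟨t + a, h⟩ = gapShift k t (f a) := by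
  rw [primeMap_of_le f (Nat.le_add_right t a)]
  simp

theorem primeMap_injective {f : Fin n → ℕ} (hf : Function.Injective f) :
    Function.Injective (primeMap n t k f) := by
  intro i j h
  rcases lt_or_ge (i : ℕ) t with hi | hi <;> rcases lt_or_ge (j : ℕ) t with hj | hj
  · rw [primeMap_of_lt f hi, primeMap_of_lt f hj] at h
    exact Fin.ext (by omega)
  · rw [primeMap_of_lt f hi, primeMap_of_le f hj] at h
    have := gapShift_lt_or_le (k := k) (t := t) (f ⟨j - t, by omega⟩)
    omega
  · rw [primeMap_of_le f hi, primeMap_of_lt f hj] at h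
    have := gapShift_lt_or_le (k := k) (t := t) (f ⟨i - t, by omega⟩)
    omega
  · rw [primeMap_of_le f hi, primeMap_of_le f hj] at h
    have := congrArg Fin.val (hf (strictMono_gapShift.injective h))
    exact Fin.ext (by simp only at this; omega)

theorem primeMap_lt (hk : k ≤ n) {f : Fin n → ℕ} (hf : ∀ a, f a < n) (i : Fin (n + t)) :
    primeMap n t k f i < n + t := by
  rcases lt_or_ge (i : ℕ) t with hi | hi
  · rw [primeMap_of_lt f hi]
    omega
  · rw [primeMap_of_le f hi]
    have := hf ⟨i - t, by omega⟩
    unfold gapShift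
    split_ifs <;> omega

theorem rankCount_primeMap (f : Fin n → ℕ) (p q : ℕ) :
    rankCount (primeMap n t k f) p q =
      #{i : Fin t | (i : ℕ) ≤ p ∧ q ≤ k + i} +
        if t ≤ p then rankCount f (p - t) (gapPull k t q) else 0 := by
  unfold rankCount
  simp only [card_filter]
  rw [Fin.sum_univ_add_eq_sum_init_add_sum_shift]
  congr 1
  · refine sum_congr rfl fun i _ => ?_
    rw [primeMap_of_lt f i.isLt]
  · split_ifs with hp
    · refine sum_congr rfl fun a _ => ?_
      rw [primeMap_add]
      refine if_congr ?_ rfl rfl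
      rw [← gc_gapPull_gapShift.le_iff_le, Fin.val_mk]
      omega
    · exact sum_eq_zero fun a _ => if_neg fun h => hp (Nat.le_of_add_right_le h.1)

theorem rankLE_primeMap_iff {f g : Fin n → ℕ} :
    rankLE (primeMap n t k f) (primeMap n t k g) ↔ rankLE f g := by
  simp only [rankLE_iff_rankCount_le, rankCount_primeMap]
  constructor
  · intro h p q
    simpa [gapPull_gapShift] using h (p + t) (gapShift k t q)
  · intro h p q
    gcongr
    split_ifs
    exacts [h _ _, le_rfl]

theorem invNum_primeMap (f : Fin n → ℕ) :
    invNum (primeMap n t k f) = t * #{a | f a < k} + invNum f := by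
  simp only [invNum, card_filter, Fintype.sum_prod_type, Fin.sum_univ_add_eq_sum_init_add_sum_shift,
    primeMap_add, Fin.mk_lt_mk, primeMap_of_lt, Fin.is_lt]
  have within_init (i j : Fin t) : ¬ ((i : ℕ) < j ∧ k + j < k + i) := by omega
  have init_shift (i : Fin t) (b : Fin n) :
      ((i : ℕ) < t + b ∧ gapShift k t (f b) < k + i) ↔ f b < k := by
    rw [gapShift_lt_add_iff i.is_lt]
    omega
  have shift_init (a : Fin n) (j : Fin t) : ¬ (t + (a : ℕ) < j ∧ k + j < gapShift k t (f a)) := by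
    omega
  have within_shift (a b : Fin n) :
      (t + (a : ℕ) < t + b ∧ gapShift k t (f b) < gapShift k t (f a)) ↔ a < b ∧ f b < f a := by
    rw [strictMono_gapShift.lt_iff_lt, Fin.lt_def]
    omega
  simp only [within_init, init_shift, shift_init, within_shift, if_false, sum_const_zero,
    zero_add, sum_const, card_univ, Fintype.card_fin, smul_eq_mul]

noncomputable def primePerm (t : ℕ) (hk : k ≤ n) (z : Perm (Fin n)) : Perm (Fin (n + t)) :=
  Equiv.ofBijective
    (fun i => ⟨primeMap n t k (fun a => z a) i, primeMap_lt hk (fun a => (z a).is_lt) i⟩)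
    (Finite.injective_iff_bijective.1 fun _ _ h =>
      primeMap_injective (Fin.val_injective.comp z.injective) (congrArg Fin.val h))

theorem primePerm_apply (hk : k ≤ n) (z : Perm (Fin n)) (i : Fin (n + t)) :
    (primePerm t hk z i : ℕ) = primeMap n t k (fun a => z a) i :=
  rfl

theorem primePerm_apply_of_lt (hk : k ≤ n) (z : Perm (Fin n)) {i : Fin (n + t)}
    (hi : (i : ℕ) < t) : (primePerm t hk z i : ℕ) = k + i :=
  primeMap_of_lt (fun a => (z a : ℕ)) hi

theorem bruhatLE_primePerm_iff (hk : k ≤ n) {a b : Perm (Fin n)} :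
    bruhatLE (primePerm t hk a) (primePerm t hk b) ↔ bruhatLE a b :=
  rankLE_primeMap_iff (f := fun i => (a i : ℕ)) (g := fun i => (b i : ℕ))

theorem primePerm_injective (hk : k ≤ n) : Function.Injective (primePerm t hk) := by
  intro z z' h
  ext a
  have := congrArg (fun w : Perm (Fin (n + t)) => (w ⟨t + a, by omega⟩ : ℕ)) h
  simpa only [primePerm_apply, primeMap_add, strictMono_gapShift.injective.eq_iff] using this

theorem exists_primePerm_eq (hk : k ≤ n) (w : Perm (Fin (n + t)))
    (hw : ∀ i : Fin (n + t), (i : ℕ) < t → (w i : ℕ) = k + i) :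
    ∃ z, primePerm t hk z = w := by
  have outside_band (i : Fin (n + t)) (hi : t ≤ (i : ℕ)) : (w i : ℕ) < k ∨ k + t ≤ w i := by
    by_contra! h
    have hj : (w ⟨w i - k, by omega⟩ : ℕ) = w i := by
      rw [hw _ (by simp only; omega)]
      simp only
      omega
    have := congrArg Fin.val (w.injective (Fin.ext hj))
    simp only at this
    omega
  let zf (a : Fin n) : Fin n := ⟨gapPull k t (w ⟨t + a, by omega⟩), by
    have := outside_band ⟨t + a, by omega⟩ (by simp)
    have := (w ⟨t + a, by omega⟩).is_lt
    unfold gapPull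
    split_ifs <;> omega⟩
  have gapShift_zf (a : Fin n) : gapShift k t (zf a) = w ⟨t + a, by omega⟩ :=
    gapShift_gapPull (outside_band _ (by simp))
  have zf_injective : Function.Injective zf := fun a b h => by
    have := congrArg (gapShift k t ∘ Fin.val) h
    simp only [Function.comp, gapShift_zf, Fin.val_inj] at this
    exact Fin.ext (by simpa using w.injective this)
  refine ⟨Equiv.ofBijective zf (Finite.injective_iff_bijective.1 zf_injective), ?_⟩
  ext i
  rw [primePerm_apply]
  rcases lt_or_ge (i : ℕ) t with hi | hi
  · rw [primeMap_of_lt _ hi, hw i hi]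
  · rw [primeMap_of_le _ hi]
    exact (gapShift_zf _).trans (by congr; simp only; omega)

end PrimeMap

/-- For `x ≤ y` in `S_n`, the set `Φ = {t+1, …, t+n}` is an interval pattern embedding of
`[x, y]` into `[x', y']`, where `x', y'` are given by equation (2.1): it is a common
pattern embedding, `x'` and `y'` agree outside `Φ`, `ℓ(y') - ℓ(x') = ℓ(y) - ℓ(x)`, and
`[x, y] ≅ [x', y']` as posets. -/
theorem primeMap_interval_pattern_embedding (n t k : ℕ) (hk : k ≤ n)
    (x y : Equiv.Perm (Fin n)) :
    (∀ i j : Fin n, i < j →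
      (primeMap n t k (fun a => (x a : ℕ)) ⟨t + i, by have := i.isLt; omega⟩ <
          primeMap n t k (fun a => (x a : ℕ)) ⟨t + j, by have := j.isLt; omega⟩ ↔
        (x i : ℕ) < x j)) ∧
    (∀ i j : Fin n, i < j →
      (primeMap n t k (fun a => (y a : ℕ)) ⟨t + i, by have := i.isLt; omega⟩ <
          primeMap n t k (fun a => (y a : ℕ)) ⟨t + j, by have := j.isLt; omega⟩ ↔
        (y i : ℕ) < y j)) ∧
    (∀ i : Fin (n + t), (i : ℕ) < t →
      primeMap n t k (fun a => (x a : ℕ)) i = primeMap n t k (fun a => (y a : ℕ)) i) ∧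
    (invNum (primeMap n t k fun a => (y a : ℕ)) + invNum (fun a => (x a : ℕ)) =
      invNum (primeMap n t k fun a => (x a : ℕ)) + invNum (fun a => (y a : ℕ))) ∧
    ∃ x' y' : Equiv.Perm (Fin (n + t)),
      (∀ i, (x' i : ℕ) = primeMap n t k (fun a => (x a : ℕ)) i) ∧
      (∀ i, (y' i : ℕ) = primeMap n t k (fun a => (y a : ℕ)) i) ∧
      ∃ f : {z : Equiv.Perm (Fin n) // bruhatLE x z ∧ bruhatLE z y} ≃
          {z : Equiv.Perm (Fin (n + t)) // bruhatLE x' z ∧ bruhatLE z y'},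
        ∀ a b, bruhatLE a.1 b.1 ↔ bruhatLE (f a).1 (f b).1 := by
  have interval_in_range (w : Perm (Fin (n + t))) (hxw : bruhatLE (primePerm t hk x) w)
      (hwy : bruhatLE w (primePerm t hk y)) : ∃ z, primePerm t hk z = w :=
    exists_primePerm_eq hk w fun i hi =>
      apply_eq_of_rankLE_of_rankLE (strictMono_id.const_add k)
        (fun _ => primePerm_apply_of_lt hk x) (fun _ => primePerm_apply_of_lt hk y) hxw hwy i hi
  refine ⟨fun i j _ => ?_, fun i j _ => ?_, fun i hi => ?_, ?_,
    primePerm t hk x, primePerm t hk y, primePerm_apply hk x, primePerm_apply hk y,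
    exists_interval_equiv_of_rel_iff (primePerm_injective hk) (fun _ _ => bruhatLE_primePerm_iff hk)
      interval_in_range⟩
  · simp only [primeMap_add, strictMono_gapShift.lt_iff_lt]
  · simp only [primeMap_add, strictMono_gapShift.lt_iff_lt]
  · rw [primeMap_of_lt _ hi, primeMap_of_lt _ hi]
  · rw [invNum_primeMap, invNum_primeMap, card_filter_perm_val_lt hk, card_filter_perm_val_lt hk]
    ring
end
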